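/- Let X ⊆ ℝⁿ be a nonempty convex compact set with κ = max_{x∈X} ‖x‖₂ > 0 and C = cone({κ} × X) ⊆ ℝ^{n+1}. Let positive payoff weights (ω_t) and positive decision weights (θ_t) satisfy θ_{t+1}/θ_t ≥ ω_{t+1}/ω_t for all t ≥ 1. Let losses f_t ∈ ℝⁿ with ‖f_t‖₂ ≤ L and decisions x_t ∈ X for t = 1,…,T, with v_t = (⟨f_t, x_t⟩/κ, −f_t), CBA⁺ iterates u_0 = 0 and u_t = π_C(u_{t−1} + ω_t v_t), and the CBA⁺ choice rule: for every t there exists β_t ≥ 0 with u_{t−1} = β_t · (κ, x_t). Then (∑_{t=1}^T θ_t ⟨f_t, x_t⟩ − inf_{x∈X} ∑_{t=1}^T θ_t ⟨f_t, x⟩) / (∑_{t=1}^T θ_t) ≤ 2 κ L (θ_T/ω_T) √(∑_{t=1}^T ω_t²) / (∑_{t=1}^T θ_t). -/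

import Mathlib

set_option autoImplicit false

open scoped RealInnerProductSpace
open Finset

noncomputable section

/-- The lifted vector `(t, y) ∈ ℝ × ℝⁿ = ℝ^{n+1}`. -/
def pr {n : ℕ} (t : ℝ) (y : EuclideanSpace ℝ (Fin n)) :
    EuclideanSpace ℝ (Fin (n + 1)) :=
  WithLp.toLp 2 (Fin.cons t (fun i => y i) : Fin (n + 1) → ℝ)

/-- The conic hull `cone({κ} × X) = {α • (κ, x) : α ≥ 0, x ∈ X}`. -/
def coneLift {n : ℕ} (κ : ℝ) (X : Set (EuclideanSpace ℝ (Fin n))) :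
    Set (EuclideanSpace ℝ (Fin (n + 1))) :=
  {u | ∃ α : ℝ, 0 ≤ α ∧ ∃ x ∈ X, u = α • pr κ x}

/-- The polar cone `C° = {z : ⟨z, w⟩ ≤ 0 ∀ w ∈ C}`. -/
def polarCone {E : Type*} [NormedAddCommGroup E] [InnerProductSpace ℝ E]
    (C : Set E) : Set E :=
  {z | ∀ w ∈ C, ⟪z, w⟫ ≤ 0}

/-- `p` is the Euclidean orthogonal projection of `u` onto the set `S`. -/
def IsProjOn {E : Type*} [NormedAddCommGroup E] [InnerProductSpace ℝ E]
    (u : E) (S : Set E) (p : E) : Prop :=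
  p ∈ S ∧ ∀ z ∈ S, dist u p ≤ dist u z

/-! CBA⁺ runs Blackwell approachability on the cone `C = cone({κ} × X)`. Since `u_{t-1}` lies on
the ray through `(κ, x_t)`, it is orthogonal to `v_t`, so by Pythagoras and the fact that projecting
onto a cone shortens vectors, `‖u_T‖² ≤ ∑ ω_t² ‖v_t‖² ≤ 2 L² ∑ ω_t²`. For a comparator `y ∈ X`,
`⟪v_t, (κ, y)⟫` is the instantaneous regret against `y`, and `u_{t-1} + ω_t v_t - u_t` lies in the
polar cone, so `ω_t` times the regret is at most the increment of `⟪u_t, (κ, y)⟫ ≥ 0`. Summation by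
parts with the nondecreasing factors `θ_t / ω_t` bounds the weighted regret by
`(θ_T / ω_T) ⟪u_T, (κ, y)⟫`, and Cauchy–Schwarz finishes. -/

theorem Finset.sum_Icc_sub_pred {M : Type*} [AddCommGroup M] (a : ℕ → M) (T : ℕ) :
    ∑ t ∈ Icc 1 T, (a t - a (t - 1)) = a T - a 0 := by
  induction T with
  | zero => simp
  | succ k ih =>
    rw [sum_Icc_succ_top (by omega), ih, Nat.add_sub_cancel]
    abel

section ConeProjection

variable {E : Type*} [NormedAddCommGroup E] [InnerProductSpace ℝ E] {C : Set E} {w p : E}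

theorem IsProjOn.inner_sub_nonpos (hC : Convex ℝ C) (h : IsProjOn w C p) :
    ∀ z ∈ C, ⟪w - p, z - p⟫ ≤ 0 := by
  have : Nonempty C := ⟨⟨p, h.1⟩⟩
  refine (norm_eq_iInf_iff_real_inner_le_zero hC h.1).1 (le_antisymm ?_ ?_)
  · exact le_ciInf fun z => by simpa only [dist_eq_norm] using h.2 z z.2
  · exact ciInf_le (f := fun z : C => ‖w - z‖)
      ⟨0, Set.forall_mem_range.2 fun _ => norm_nonneg _⟩ ⟨p, h.1⟩

theorem IsProjOn.inner_sub_self_eq_zero (hC : Convex ℝ C)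
    (hCs : ∀ c : ℝ, 0 ≤ c → ∀ z ∈ C, c • z ∈ C) (h : IsProjOn w C p) : ⟪w - p, p⟫ = 0 := by
  have h0 := h.inner_sub_nonpos hC _ (hCs 0 le_rfl p h.1)
  have h2 := h.inner_sub_nonpos hC _ (hCs 2 zero_le_two p h.1)
  rw [zero_smul, zero_sub, inner_neg_right] at h0
  rw [two_smul, add_sub_cancel_right] at h2
  linarith

theorem IsProjOn.sub_mem_polarCone (hC : Convex ℝ C)
    (hCs : ∀ c : ℝ, 0 ≤ c → ∀ z ∈ C, c • z ∈ C) (h : IsProjOn w C p) : w - p ∈ polarCone C := by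
  intro z hz
  have := h.inner_sub_nonpos hC z hz
  rwa [inner_sub_right, h.inner_sub_self_eq_zero hC hCs, sub_zero] at this

theorem IsProjOn.norm_le (hC : Convex ℝ C)
    (hCs : ∀ c : ℝ, 0 ≤ c → ∀ z ∈ C, c • z ∈ C) (h : IsProjOn w C p) : ‖p‖ ≤ ‖w‖ := by
  have hpyth := norm_add_sq_eq_norm_sq_add_norm_sq_real
    ((real_inner_comm _ _).trans (h.inner_sub_self_eq_zero hC hCs))
  rw [add_sub_cancel] at hpyth
  nlinarith [norm_nonneg p, norm_nonneg w, mul_self_nonneg ‖w - p‖]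

variable {u v : ℕ → E} {ω θ : ℕ → ℝ} {T : ℕ}

theorem norm_sq_le_sum_of_isProjOn (hC : Convex ℝ C)
    (hCs : ∀ c : ℝ, 0 ≤ c → ∀ z ∈ C, c • z ∈ C) (hu0 : u 0 = 0)
    (hu : ∀ t ∈ Icc 1 T, IsProjOn (u (t - 1) + ω t • v t) C (u t))
    (horth : ∀ t ∈ Icc 1 T, ⟪u (t - 1), v t⟫ = 0) :
    ‖u T‖ ^ 2 ≤ ∑ t ∈ Icc 1 T, ω t ^ 2 * ‖v t‖ ^ 2 := by
  have step : ∀ t ∈ Icc 1 T, ‖u t‖ ^ 2 - ‖u (t - 1)‖ ^ 2 ≤ ω t ^ 2 * ‖v t‖ ^ 2 := by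
    intro t ht
    have hpyth : ‖u (t - 1) + ω t • v t‖ ^ 2 = ‖u (t - 1)‖ ^ 2 + ω t ^ 2 * ‖v t‖ ^ 2 := by
      rw [norm_add_sq_real, real_inner_smul_right, horth t ht, norm_smul, mul_pow,
        Real.norm_eq_abs, sq_abs]
      ring
    have := pow_le_pow_left₀ (norm_nonneg _) ((hu t ht).norm_le hC hCs) 2
    linarith
  simpa [hu0] using ((sum_Icc_sub_pred (fun t => ‖u t‖ ^ 2) T).symm.trans_le (sum_le_sum step))

theorem sum_mul_inner_le_of_isProjOn (hC : Convex ℝ C)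
    (hCs : ∀ c : ℝ, 0 ≤ c → ∀ z ∈ C, c • z ∈ C) (hu0 : u 0 = 0)
    (hu : ∀ t ∈ Icc 1 T, IsProjOn (u (t - 1) + ω t • v t) C (u t))
    {z : E} (hz : z ∈ C) (hCz : ∀ w ∈ C, 0 ≤ ⟪w, z⟫)
    (hω : ∀ t ≥ 1, 0 < ω t) (hθ : ∀ t ≥ 1, 0 ≤ θ t)
    (hmono : ∀ t ≥ 1, θ t / ω t ≤ θ (t + 1) / ω (t + 1)) :
    ∑ t ∈ Icc 1 T, θ t * ⟪v t, z⟫ ≤ θ T / ω T * ⟪u T, z⟫ := by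
  have step : ∀ t ∈ Icc 1 T, θ t * ⟪v t, z⟫
      ≤ θ t / ω t * ⟪u t, z⟫ - θ (t - 1) / ω (t - 1) * ⟪u (t - 1), z⟫ := by
    intro t ht
    obtain ⟨ht1, htT⟩ := mem_Icc.1 ht
    have hpolar : ω t * ⟪v t, z⟫ ≤ ⟪u t, z⟫ - ⟪u (t - 1), z⟫ := by
      have := (hu t ht).sub_mem_polarCone hC hCs z hz
      rw [inner_sub_left, inner_add_left, real_inner_smul_left] at this
      linarith
    have hprev : θ (t - 1) / ω (t - 1) * ⟪u (t - 1), z⟫ ≤ θ t / ω t * ⟪u (t - 1), z⟫ := by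
      rcases Nat.lt_or_ge 1 t with ht2 | ht2
      · have hm := hmono (t - 1) (by omega)
        rw [Nat.sub_add_cancel ht1] at hm
        exact mul_le_mul_of_nonneg_right hm (hCz _ (hu (t - 1) (mem_Icc.2 ⟨by omega, by omega⟩)).1)
      · obtain rfl : t = 1 := by omega
        simp [hu0]
    have hωt := hω t ht1
    calc θ t * ⟪v t, z⟫ = θ t / ω t * (ω t * ⟪v t, z⟫) := by field_simp
      _ ≤ θ t / ω t * (⟪u t, z⟫ - ⟪u (t - 1), z⟫) := by
        gcongr
        exact div_nonneg (hθ t ht1) hωt.le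
      _ ≤ _ := by linarith
  calc ∑ t ∈ Icc 1 T, θ t * ⟪v t, z⟫
      ≤ ∑ t ∈ Icc 1 T, (θ t / ω t * ⟪u t, z⟫ - θ (t - 1) / ω (t - 1) * ⟪u (t - 1), z⟫) :=
        sum_le_sum step
    _ = θ T / ω T * ⟪u T, z⟫ := by
      rw [sum_Icc_sub_pred (fun t => θ t / ω t * ⟪u t, z⟫) T, hu0, inner_zero_left, mul_zero,
        sub_zero]

end ConeProjection

theorem div_le_div_of_div_le_div {a b c d : ℝ} (ha : 0 < a) (hb : 0 < b) (hc : 0 < c)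
    (h : c / a ≤ d / b) : b / a ≤ d / c := by
  rw [div_le_div_iff₀ ha hb] at h
  rw [div_le_div_iff₀ ha hc]
  linarith

section Lift

variable {n : ℕ} {κ : ℝ} {X : Set (EuclideanSpace ℝ (Fin n))}

theorem inner_pr_pr (s t : ℝ) (y z : EuclideanSpace ℝ (Fin n)) :
    ⟪pr s y, pr t z⟫ = s * t + ⟪y, z⟫ := by
  simp [pr, PiLp.inner_apply, RCLike.inner_apply, Fin.sum_univ_succ]
  ring

theorem pr_add_pr (s t : ℝ) (y z : EuclideanSpace ℝ (Fin n)) :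
    pr s y + pr t z = pr (s + t) (y + z) := by
  ext i; induction i using Fin.cases <;> simp [pr]

theorem smul_pr (c s : ℝ) (y : EuclideanSpace ℝ (Fin n)) : c • pr s y = pr (c * s) (c • y) := by
  ext i; induction i using Fin.cases <;> simp [pr]

theorem norm_pr_sq (s : ℝ) (y : EuclideanSpace ℝ (Fin n)) : ‖pr s y‖ ^ 2 = s ^ 2 + ‖y‖ ^ 2 := by
  rw [← real_inner_self_eq_norm_sq, ← real_inner_self_eq_norm_sq, inner_pr_pr]
  ring

theorem norm_pr_sq_le {s M : ℝ} {y : EuclideanSpace ℝ (Fin n)} (hs : |s| ≤ M) (hy : ‖y‖ ≤ M) :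
    ‖pr s y‖ ^ 2 ≤ 2 * M ^ 2 := by
  rw [norm_pr_sq, ← sq_abs s]
  nlinarith [abs_nonneg s, norm_nonneg y]

theorem inner_pr_payoff (hκ : κ ≠ 0) (f x y : EuclideanSpace ℝ (Fin n)) :
    ⟪pr (⟪f, x⟫ / κ) (-f), pr κ y⟫ = ⟪f, x⟫ - ⟪f, y⟫ := by
  rw [inner_pr_pr, inner_neg_left, div_mul_cancel₀ _ hκ, sub_eq_add_neg]

theorem norm_pr_payoff_sq_le {f x : EuclideanSpace ℝ (Fin n)} {L : ℝ} (hκ : 0 < κ)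
    (hx : ‖x‖ ≤ κ) (hf : ‖f‖ ≤ L) : ‖pr (⟪f, x⟫ / κ) (-f)‖ ^ 2 ≤ 2 * L ^ 2 := by
  refine norm_pr_sq_le ?_ (by rwa [norm_neg])
  rw [abs_div, abs_of_pos hκ, div_le_iff₀ hκ]
  exact (abs_real_inner_le_norm f x).trans
    (mul_le_mul hf hx (norm_nonneg x) ((norm_nonneg f).trans hf))

theorem inner_pr_le_of_norm_sq_le {w : EuclideanSpace ℝ (Fin (n + 1))}
    {y : EuclideanSpace ℝ (Fin n)} {a : ℝ} (hw : ‖w‖ ^ 2 ≤ 2 * a ^ 2) (ha : 0 ≤ a)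
    (hy : ‖y‖ ≤ κ) : ⟪w, pr κ y⟫ ≤ 2 * κ * a := by
  have hκ : 0 ≤ κ := (norm_nonneg y).trans hy
  refine (real_inner_le_norm _ _).trans ((sq_le_sq₀ (by positivity) (by positivity)).1 ?_)
  calc (‖w‖ * ‖pr κ y‖) ^ 2 = ‖w‖ ^ 2 * ‖pr κ y‖ ^ 2 := mul_pow _ _ _
    _ ≤ (2 * a ^ 2) * (2 * κ ^ 2) :=
      mul_le_mul hw (norm_pr_sq_le (abs_of_nonneg hκ).le hy) (sq_nonneg _) (by positivity)
    _ = (2 * κ * a) ^ 2 := by ring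

theorem pr_mem_coneLift {y : EuclideanSpace ℝ (Fin n)} (hy : y ∈ X) : pr κ y ∈ coneLift κ X :=
  ⟨1, zero_le_one, y, hy, (one_smul ℝ _).symm⟩

theorem smul_mem_coneLift {c : ℝ} (hc : 0 ≤ c) {w : EuclideanSpace ℝ (Fin (n + 1))}
    (hw : w ∈ coneLift κ X) : c • w ∈ coneLift κ X := by
  obtain ⟨α, hα, x, hx, rfl⟩ := hw
  exact ⟨c * α, mul_nonneg hc hα, x, hx, smul_smul c α _⟩

theorem convex_coneLift (hX : Convex ℝ X) : Convex ℝ (coneLift κ X) := by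
  rintro _ ⟨α, hα, x₁, hx₁, rfl⟩ _ ⟨β, hβ, x₂, hx₂, rfl⟩ a b ha hb -
  obtain ⟨y, hy, hyeq⟩ := hX.exists_mem_add_smul_eq hx₁ hx₂ (mul_nonneg ha hα) (mul_nonneg hb hβ)
  refine ⟨a * α + b * β, by positivity, y, hy, ?_⟩
  rw [smul_smul, smul_smul, smul_pr, smul_pr, smul_pr, pr_add_pr, hyeq, add_mul]

theorem inner_pr_nonneg_of_mem_coneLift (hXκ : ∀ x ∈ X, ‖x‖ ≤ κ)
    {w : EuclideanSpace ℝ (Fin (n + 1))} (hw : w ∈ coneLift κ X) {y : EuclideanSpace ℝ (Fin n)}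
    (hy : y ∈ X) : 0 ≤ ⟪w, pr κ y⟫ := by
  obtain ⟨α, hα, x, hx, rfl⟩ := hw
  rw [real_inner_smul_left, inner_pr_pr]
  have hxy := (abs_le.1 ((abs_real_inner_le_norm x y).trans
    (mul_le_mul (hXκ x hx) (hXκ y hy) (norm_nonneg y) ((norm_nonneg x).trans (hXκ x hx))))).1
  nlinarith

end Lift

theorem stmt8_general {n : ℕ} (X : Set (EuclideanSpace ℝ (Fin n)))
    (hXne : X.Nonempty) (hXcv : Convex ℝ X)
    (κ : ℝ) (hκ : IsGreatest ((fun x => ‖x‖) '' X) κ) (hκpos : 0 < κ)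
    (T : ℕ) (hT : 1 ≤ T)
    (ω θ : ℕ → ℝ) (hω : ∀ t ≥ 1, 0 < ω t) (hθ : ∀ t ≥ 1, 0 < θ t)
    (hrat : ∀ t ≥ 1, ω (t + 1) / ω t ≤ θ (t + 1) / θ t)
    (f x : ℕ → EuclideanSpace ℝ (Fin n)) (hx : ∀ t ∈ Icc 1 T, x t ∈ X)
    (L : ℝ) (hL : ∀ t ∈ Icc 1 T, ‖f t‖ ≤ L)
    (v : ℕ → EuclideanSpace ℝ (Fin (n + 1)))
    (hv : ∀ t, v t = pr (⟪f t, x t⟫ / κ) (-(f t)))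
    (u : ℕ → EuclideanSpace ℝ (Fin (n + 1))) (hu0 : u 0 = 0)
    (hu : ∀ t ∈ Icc 1 T, IsProjOn (u (t - 1) + ω t • v t) (coneLift κ X) (u t))
    (hchoice : ∀ t ∈ Icc 1 T, ∃ β : ℝ, 0 ≤ β ∧ u (t - 1) = β • pr κ (x t)) :
    ((∑ t ∈ Icc 1 T, θ t * ⟪f t, x t⟫)
          - ⨅ xx : X, ∑ t ∈ Icc 1 T, θ t * ⟪f t, (xx : EuclideanSpace ℝ (Fin n))⟫)
        / (∑ t ∈ Icc 1 T, θ t)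
      ≤ 2 * κ * L * (θ T / ω T) * Real.sqrt (∑ t ∈ Icc 1 T, ω t ^ 2)
        / (∑ t ∈ Icc 1 T, θ t) := by
  have hXκ : ∀ y ∈ X, ‖y‖ ≤ κ := fun y hy => hκ.2 ⟨y, hy, rfl⟩
  have hCc : Convex ℝ (coneLift κ X) := convex_coneLift hXcv
  have hCs : ∀ c : ℝ, 0 ≤ c → ∀ w ∈ coneLift κ X, c • w ∈ coneLift κ X :=
    fun c hc w hw => smul_mem_coneLift hc hw
  have horth : ∀ t ∈ Icc 1 T, ⟪u (t - 1), v t⟫ = 0 := by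
    intro t ht
    obtain ⟨β, -, hβ⟩ := hchoice t ht
    rw [hβ, hv, real_inner_smul_left, real_inner_comm, inner_pr_payoff hκpos.ne', sub_self,
      mul_zero]
  set S := ∑ t ∈ Icc 1 T, ω t ^ 2
  have huT : ‖u T‖ ^ 2 ≤ 2 * (L * Real.sqrt S) ^ 2 := by
    rw [mul_pow, Real.sq_sqrt (sum_nonneg fun t _ => sq_nonneg _), mul_sum, mul_sum]
    refine (norm_sq_le_sum_of_isProjOn hCc hCs hu0 hu horth).trans (sum_le_sum fun t ht => ?_)
    rw [hv]
    nlinarith [norm_pr_payoff_sq_le hκpos (hXκ _ (hx t ht)) (hL t ht), sq_nonneg (ω t)]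
  have hL0 : 0 ≤ L := (norm_nonneg _).trans (hL 1 (mem_Icc.2 ⟨le_rfl, hT⟩))
  have hregret : ∀ y ∈ X, ∑ t ∈ Icc 1 T, θ t * ⟪f t, x t⟫ - ∑ t ∈ Icc 1 T, θ t * ⟪f t, y⟫
      ≤ 2 * κ * L * (θ T / ω T) * Real.sqrt S := by
    intro y hy
    have hsum := sum_mul_inner_le_of_isProjOn hCc hCs hu0 hu (pr_mem_coneLift hy)
      (fun w hw => inner_pr_nonneg_of_mem_coneLift hXκ hw hy) hω (fun t ht => (hθ t ht).le)
      (fun t ht => div_le_div_of_div_le_div (hω t ht) (hθ t ht) (hω (t + 1) (by omega)) (hrat t ht))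
    simp only [hv, inner_pr_payoff hκpos.ne', mul_sub, sum_sub_distrib] at hsum
    calc _ ≤ θ T / ω T * ⟪u T, pr κ y⟫ := hsum
      _ ≤ θ T / ω T * (2 * κ * (L * Real.sqrt S)) :=
        mul_le_mul_of_nonneg_left (inner_pr_le_of_norm_sq_le huT (by positivity) (hXκ y hy))
          (div_nonneg (hθ T hT).le (hω T hT).le)
      _ = _ := by ring
  have : Nonempty X := hXne.to_subtype
  refine div_le_div_of_nonneg_right ?_ (sum_nonneg fun t ht => (hθ t (mem_Icc.1 ht).1).le)
  have hinf := le_ciInf fun y : X => sub_le_comm.1 (hregret y y.2)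
  linarith

/-- Theorem 3: CBA⁺ with payoff weights `ω_t` and decision weights
`θ_t` satisfying `θ_{t+1}/θ_t ≥ ω_{t+1}/ω_t` has weighted average regret at most
`2 κ L (θ_T/ω_T) √(∑ ω_t²) / (∑ θ_t)`. -/
theorem stmt8 {n : ℕ} (X : Set (EuclideanSpace ℝ (Fin n)))
    (hXne : X.Nonempty) (hXcv : Convex ℝ X) (hXcp : IsCompact X)
    (κ : ℝ) (hκ : IsGreatest ((fun x => ‖x‖) '' X) κ) (hκpos : 0 < κ)
    (T : ℕ) (hT : 1 ≤ T)
    (ω θ : ℕ → ℝ) (hω : ∀ t ≥ 1, 0 < ω t) (hθ : ∀ t ≥ 1, 0 < θ t)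
    (hrat : ∀ t ≥ 1, ω (t + 1) / ω t ≤ θ (t + 1) / θ t)
    (f x : ℕ → EuclideanSpace ℝ (Fin n)) (hx : ∀ t ∈ Icc 1 T, x t ∈ X)
    (L : ℝ) (hL : ∀ t ∈ Icc 1 T, ‖f t‖ ≤ L)
    (v : ℕ → EuclideanSpace ℝ (Fin (n + 1)))
    (hv : ∀ t, v t = pr (⟪f t, x t⟫ / κ) (-(f t)))
    (u : ℕ → EuclideanSpace ℝ (Fin (n + 1))) (hu0 : u 0 = 0)
    (hu : ∀ t ∈ Icc 1 T, IsProjOn (u (t - 1) + ω t • v t) (coneLift κ X) (u t))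
    (hchoice : ∀ t ∈ Icc 1 T, ∃ β : ℝ, 0 ≤ β ∧ u (t - 1) = β • pr κ (x t)) :
    ((∑ t ∈ Icc 1 T, θ t * ⟪f t, x t⟫)
          - ⨅ xx : X, ∑ t ∈ Icc 1 T, θ t * ⟪f t, (xx : EuclideanSpace ℝ (Fin n))⟫)
        / (∑ t ∈ Icc 1 T, θ t)
      ≤ 2 * κ * L * (θ T / ω T) * Real.sqrt (∑ t ∈ Icc 1 T, ω t ^ 2)
        / (∑ t ∈ Icc 1 T, θ t) :=
  stmt8_general X hXne hXcv κ hκ hκpos T hT ω θ hω hθ hrat f x hx L hL v hv u hu0 hu hchoice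

end
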